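/- There exist constants C > 0 and β₀ > 0 with the following property. For every Δ > 0 and σ > 0 with β := Δ² / (2σ²) ≤ β₀, if X is a random variable uniformly distributed on the two-point set {−Δ/2, Δ/2} ⊂ ℝ and Y = X + Z where Z is a Gaussian random variable with mean 0 and variance σ² independent of X, then the mutual information satisfies I(X; Y) ≥ β/4 − C β². Consequently, the upper bound I ≤ Δ²/(2σ²) for the Gaussian mechanism is tight up to a universal constant factor as β → 0. -/

import Mathlib

open MeasureTheory ProbabilityTheory Real
open scoped ENNReal NNReal Classical

/-- Kullback–Leibler divergence of probability measures. -/
noncomputable def klDiv {α : Type*} [MeasurableSpace α] (μ ν : Measure α) : ℝ≥0∞ :=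
  if μ ≪ ν ∧ Integrable (llr μ ν) μ then ENNReal.ofReal (∫ x, llr μ ν x ∂μ) else ⊤

/-- Mutual information of two random variables: the KL divergence between the joint law
and the product of the marginal laws. -/
noncomputable def mutualInfo {Ω α β : Type*} [MeasurableSpace Ω] [MeasurableSpace α]
    [MeasurableSpace β] (P : Measure Ω) (X : Ω → α) (Y : Ω → β) : ℝ≥0∞ :=
  klDiv (P.map fun ω => (X ω, Y ω)) ((P.map X).prod (P.map Y))

/-!
Let `X = ±a` uniformly and `Z ~ N(0, v)`. By the Donsker–Varadhan inequality,
`I(X; Y) ≥ E[f(X, Y)] - log E[exp f(X, Y')]` for every test function `f`, where `Y'` has the law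
of `Y` and is independent of `X`. For `f(x, y) = s x y` the first term is `s a²`, because
`E[X²] = a²` and `E[X Z] = 0`. The second term averages the moment generating function of
`Y = X + Z`, which is `cosh (a t) * exp (v t² / 2)`, at `t = ± s a`, and equals
`log cosh (s a²) + v s² a² / 2`. Taking `s = 1 / σ²` and using `log cosh x ≤ x² / 2` yields
`β / 4 - β² / 8`.
-/

section TwoPoint

variable {α : Type*} [MeasurableSpace α]

lemma integrable_half_dirac_add_dirac [MeasurableSingletonClass α] {x y : α} (f : α → ℝ) :
    Integrable f ((1 / 2 : ℝ≥0∞) • (Measure.dirac x + Measure.dirac y)) :=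
  ((integrable_dirac enorm_lt_top).add_measure (integrable_dirac enorm_lt_top)).smul_measure
    (by norm_num)

lemma integral_half_dirac_add_dirac [MeasurableSingletonClass α] {x y : α} (f : α → ℝ) :
    ∫ z, f z ∂((1 / 2 : ℝ≥0∞) • (Measure.dirac x + Measure.dirac y)) = (f x + f y) / 2 := by
  rw [integral_smul_measure, integral_add_measure (integrable_dirac enorm_lt_top)
    (integrable_dirac enorm_lt_top), integral_dirac, integral_dirac]
  norm_num
  ring

variable {β : Type*} [MeasurableSpace β] {ν : Measure β} [SFinite ν]

lemma half_dirac_add_dirac_prod (x y : α) :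
    ((1 / 2 : ℝ≥0∞) • (Measure.dirac x + Measure.dirac y)).prod ν
      = (1 / 2 : ℝ≥0∞) • (ν.map (Prod.mk x) + ν.map (Prod.mk y)) := by
  rw [Measure.prod_smul_left, Measure.add_prod, Measure.dirac_prod, Measure.dirac_prod]

lemma integrable_half_dirac_add_dirac_prod {x y : α} {f : α × β → ℝ} (hf : Measurable f)
    (hx : Integrable (fun z ↦ f (x, z)) ν) (hy : Integrable (fun z ↦ f (y, z)) ν) :
    Integrable f (((1 / 2 : ℝ≥0∞) • (Measure.dirac x + Measure.dirac y)).prod ν) := by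
  rw [half_dirac_add_dirac_prod]
  refine Integrable.smul_measure (Integrable.add_measure ?_ ?_) (by norm_num)
  · exact (integrable_map_measure hf.aestronglyMeasurable measurable_prodMk_left.aemeasurable).2 hx
  · exact (integrable_map_measure hf.aestronglyMeasurable measurable_prodMk_left.aemeasurable).2 hy

lemma integral_half_dirac_add_dirac_prod {x y : α} {f : α × β → ℝ} (hf : Measurable f)
    (hx : Integrable (fun z ↦ f (x, z)) ν) (hy : Integrable (fun z ↦ f (y, z)) ν) :
    ∫ p, f p ∂((1 / 2 : ℝ≥0∞) • (Measure.dirac x + Measure.dirac y)).prod ν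
      = (∫ z, f (x, z) ∂ν + ∫ z, f (y, z) ∂ν) / 2 := by
  rw [half_dirac_add_dirac_prod, integral_smul_measure, integral_add_measure,
    integral_map measurable_prodMk_left.aemeasurable hf.aestronglyMeasurable,
    integral_map measurable_prodMk_left.aemeasurable hf.aestronglyMeasurable]
  · norm_num
    ring
  · exact (integrable_map_measure hf.aestronglyMeasurable measurable_prodMk_left.aemeasurable).2 hx
  · exact (integrable_map_measure hf.aestronglyMeasurable measurable_prodMk_left.aemeasurable).2 hy

end TwoPoint

lemma mgf_of_map_eq_half_dirac_add_dirac {Ω : Type*} [MeasurableSpace Ω] {P : Measure Ω}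
    {X : Ω → ℝ} (hX : AEMeasurable X P) {a : ℝ}
    (hXa : P.map X = (1 / 2 : ℝ≥0∞) • (Measure.dirac (-a) + Measure.dirac a)) (t : ℝ) :
    mgf X P t = cosh (a * t) := by
  rw [← mgf_id_map hX, hXa, mgf, integral_half_dirac_add_dirac, cosh_eq]
  simp only [id, mul_neg]
  ring_nf

section DonskerVaradhan

variable {α : Type*} [MeasurableSpace α] {μ ν : Measure α} [IsProbabilityMeasure μ]
  [IsProbabilityMeasure ν] {f : α → ℝ}

/- Gibbs' inequality for `μ` against the tilted measure `ν.tilted f`, using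
`llr μ (ν.tilted f) = llr μ ν - f + log ∫ exp f ∂ν`. -/
lemma integral_sub_log_integral_exp_le_integral_llr (hμν : μ ≪ ν)
    (h_int : Integrable (llr μ ν) μ) (hfμ : Integrable f μ)
    (hfν : Integrable (fun x ↦ exp (f x)) ν) :
    ∫ x, f x ∂μ - log (∫ x, exp (f x) ∂ν) ≤ ∫ x, llr μ ν x ∂μ := by
  have : IsProbabilityMeasure (ν.tilted f) := isProbabilityMeasure_tilted hfν
  have hμν' : μ ≪ ν.tilted f := hμν.trans (absolutelyContinuous_tilted hfν)
  have gibbs := InformationTheory.integral_llr_add_sub_measure_univ_nonneg hμν'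
    (integrable_llr_tilted_right hμν hfμ h_int hfν)
  rw [integral_llr_tilted_right hμν hfμ hfν h_int] at gibbs
  simp only [probReal_univ] at gibbs
  linarith

lemma ofReal_integral_sub_log_integral_exp_le_klDiv (hfμ : Integrable f μ)
    (hfν : Integrable (fun x ↦ exp (f x)) ν) :
    ENNReal.ofReal (∫ x, f x ∂μ - log (∫ x, exp (f x) ∂ν)) ≤ klDiv μ ν := by
  rw [klDiv]
  split_ifs with h
  · exact ENNReal.ofReal_le_ofReal
      (integral_sub_log_integral_exp_le_integral_llr h.1 h.2 hfμ hfν)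
  · exact le_top

end DonskerVaradhan

structure IsBinaryGaussianChannel {Ω : Type*} [MeasurableSpace Ω] (P : Measure Ω)
    (X Z : Ω → ℝ) (a : ℝ) (v : ℝ≥0) : Prop where
  measurable_input : Measurable X
  measurable_noise : Measurable Z
  map_input : P.map X = (1 / 2 : ℝ≥0∞) • (Measure.dirac (-a) + Measure.dirac a)
  map_noise : P.map Z = gaussianReal 0 v
  indepFun : IndepFun X Z P

namespace IsBinaryGaussianChannel

variable {Ω : Type*} [MeasurableSpace Ω] {P : Measure Ω} {X Z : Ω → ℝ} {a : ℝ} {v : ℝ≥0}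

lemma measurable_output (h : IsBinaryGaussianChannel P X Z a v) :
    Measurable fun ω ↦ X ω + Z ω :=
  h.measurable_input.add h.measurable_noise

lemma mgf_output (h : IsBinaryGaussianChannel P X Z a v) (t : ℝ) :
    mgf (fun ω ↦ X ω + Z ω) P t = cosh (a * t) * exp (v * t ^ 2 / 2) := by
  rw [← Pi.add_def, h.indepFun.mgf_add' h.measurable_input.aestronglyMeasurable
      h.measurable_noise.aestronglyMeasurable,
    mgf_of_map_eq_half_dirac_add_dirac h.measurable_input.aemeasurable h.map_input,
    mgf_gaussianReal h.map_noise, zero_mul, zero_add]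

lemma integral_exp_mul_map_output (h : IsBinaryGaussianChannel P X Z a v) (t : ℝ) :
    ∫ y, exp (t * y) ∂(P.map fun ω ↦ X ω + Z ω) = cosh (a * t) * exp (v * t ^ 2 / 2) := by
  rw [← h.mgf_output, mgf, integral_map h.measurable_output.aemeasurable (by fun_prop)]

lemma integrable_and_integral_input_mul_output (h : IsBinaryGaussianChannel P X Z a v) :
    Integrable (fun ω ↦ X ω * (X ω + Z ω)) P ∧ ∫ ω, X ω * (X ω + Z ω) ∂P = a ^ 2 := by
  have hX := h.measurable_input
  have hZ := h.measurable_noise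
  have hXint : Integrable X P := (integrable_map_measure aestronglyMeasurable_id
    hX.aemeasurable).1 (h.map_input ▸ integrable_half_dirac_add_dirac id)
  have hXXint : Integrable (fun ω ↦ X ω * X ω) P := (integrable_map_measure
    (f := X) (g := fun x ↦ x * x) (by fun_prop) hX.aemeasurable).1
    (h.map_input ▸ integrable_half_dirac_add_dirac _)
  have hZint : Integrable Z P := (integrable_map_measure aestronglyMeasurable_id
    hZ.aemeasurable).1 (h.map_noise ▸ IsGaussian.integrable_id)
  have hXZint : Integrable (fun ω ↦ X ω * Z ω) P := h.indepFun.integrable_mul hXint hZint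
  have hXX : ∫ ω, X ω * X ω ∂P = a ^ 2 := by
    rw [← integral_map (f := fun x ↦ x * x) hX.aemeasurable (by fun_prop), h.map_input,
      integral_half_dirac_add_dirac]
    ring
  have hZ0 : ∫ ω, Z ω ∂P = 0 := by
    rw [← integral_id_gaussianReal (μ := 0) (v := v), ← h.map_noise]
    exact (integral_map hZ.aemeasurable aestronglyMeasurable_id).symm
  have hXZ0 : ∫ ω, X ω * Z ω ∂P = 0 := by
    rw [← Pi.mul_def, h.indepFun.integral_mul_eq_mul_integral hXint.1 hZint.1, hZ0, mul_zero]
  simp only [mul_add]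
  exact ⟨hXXint.add hXZint, by rw [integral_add hXXint hXZint, hXX, hXZ0, add_zero]⟩

variable [IsProbabilityMeasure P]

lemma integrable_exp_mul_map_output (h : IsBinaryGaussianChannel P X Z a v) (t : ℝ) :
    Integrable (fun y ↦ exp (t * y)) (P.map fun ω ↦ X ω + Z ω) := by
  refine (integrable_map_measure (by fun_prop) h.measurable_output.aemeasurable).2 ?_
  rw [Function.comp_def, ← mgf_pos_iff, h.mgf_output]
  positivity

lemma integrable_and_integral_exp_mul_fst_mul_snd (h : IsBinaryGaussianChannel P X Z a v)
    (s : ℝ) :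
    Integrable (fun p ↦ exp (s * p.1 * p.2)) ((P.map X).prod (P.map fun ω ↦ X ω + Z ω)) ∧
    ∫ p, exp (s * p.1 * p.2) ∂(P.map X).prod (P.map fun ω ↦ X ω + Z ω)
      = cosh (s * a ^ 2) * exp (v * (s * a) ^ 2 / 2) := by
  have hf : Measurable fun p : ℝ × ℝ ↦ exp (s * p.1 * p.2) := by fun_prop
  have hneg := h.integrable_exp_mul_map_output (s * -a)
  have hpos := h.integrable_exp_mul_map_output (s * a)
  rw [h.map_input]
  refine ⟨integrable_half_dirac_add_dirac_prod hf hneg hpos, ?_⟩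
  rw [integral_half_dirac_add_dirac_prod hf hneg hpos]
  dsimp only
  rw [h.integral_exp_mul_map_output, h.integral_exp_mul_map_output, ← cosh_neg]
  ring_nf

lemma ofReal_le_mutualInfo (h : IsBinaryGaussianChannel P X Z a v) (s : ℝ) :
    ENNReal.ofReal (s * a ^ 2 - log (cosh (s * a ^ 2)) - v * (s * a) ^ 2 / 2)
      ≤ mutualInfo P X (fun ω ↦ X ω + Z ω) := by
  have hXY : Measurable fun ω ↦ (X ω, X ω + Z ω) := h.measurable_input.prodMk h.measurable_output
  have : IsProbabilityMeasure (P.map X) :=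
    Measure.isProbabilityMeasure_map h.measurable_input.aemeasurable
  have : IsProbabilityMeasure (P.map fun ω ↦ X ω + Z ω) :=
    Measure.isProbabilityMeasure_map h.measurable_output.aemeasurable
  have : IsProbabilityMeasure (P.map fun ω ↦ (X ω, X ω + Z ω)) :=
    Measure.isProbabilityMeasure_map hXY.aemeasurable
  obtain ⟨hXY_int, hXY_eq⟩ := h.integrable_and_integral_input_mul_output
  obtain ⟨hexp_int, hexp_eq⟩ := h.integrable_and_integral_exp_mul_fst_mul_snd s
  have hf : Measurable fun p : ℝ × ℝ ↦ s * p.1 * p.2 := by fun_prop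
  have hf_int : Integrable (fun p : ℝ × ℝ ↦ s * p.1 * p.2) (P.map fun ω ↦ (X ω, X ω + Z ω)) := by
    refine (integrable_map_measure hf.aestronglyMeasurable hXY.aemeasurable).2 ?_
    simpa only [Function.comp_def, mul_assoc] using hXY_int.const_mul s
  have hf_eq : ∫ p, s * p.1 * p.2 ∂(P.map fun ω ↦ (X ω, X ω + Z ω)) = s * a ^ 2 := by
    rw [integral_map hXY.aemeasurable hf.aestronglyMeasurable]
    simp only [mul_assoc]
    rw [integral_const_mul, hXY_eq]
  have key := ofReal_integral_sub_log_integral_exp_le_klDiv hf_int hexp_int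
  rwa [hf_eq, hexp_eq, log_mul (cosh_pos _).ne' (exp_pos _).ne', log_exp, ← sub_sub] at key

end IsBinaryGaussianChannel

/-- **Tightness of the Gaussian-mechanism mutual information bound.**
There are constants `C > 0` and `β₀ > 0` such that for all `Δ, σ > 0` with
`β := Δ²/(2σ²) ≤ β₀`, if `X` is uniform on `{−Δ/2, Δ/2}` and `Y = X + Z` with
`Z ~ N(0, σ²)` independent of `X`, then `I(X ; Y) ≥ β/4 − C β²`. -/
theorem gaussian_mechanism_mi_tight :
    ∃ C > (0 : ℝ), ∃ β₀ > (0 : ℝ),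
      ∀ (Δ σ : ℝ), 0 < Δ → 0 < σ → Δ ^ 2 / (2 * σ ^ 2) ≤ β₀ →
        ∀ {Ω : Type*} [MeasurableSpace Ω] (P : Measure Ω), IsProbabilityMeasure P →
          ∀ (X Z : Ω → ℝ), Measurable X → Measurable Z →
            P.map X = (1 / 2 : ℝ≥0∞) • (Measure.dirac (-(Δ / 2)) + Measure.dirac (Δ / 2)) →
            P.map Z = gaussianReal 0 (σ ^ 2).toNNReal →
            IndepFun X Z P →
            ENNReal.ofReal (Δ ^ 2 / (2 * σ ^ 2) / 4 - C * (Δ ^ 2 / (2 * σ ^ 2)) ^ 2)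
              ≤ mutualInfo P X (fun ω => X ω + Z ω) := by
  refine ⟨1 / 8, by norm_num, 1, by norm_num, fun Δ σ _ hσ _ Ω _ P _ X Z hX hZ hXa hZv hXZ ↦ ?_⟩
  have channel : IsBinaryGaussianChannel P X Z (Δ / 2) (σ ^ 2).toNNReal :=
    ⟨hX, hZ, hXa, hZv, hXZ⟩
  refine le_trans (ENNReal.ofReal_le_ofReal ?_) (channel.ofReal_le_mutualInfo (1 / σ ^ 2))
  set β := Δ ^ 2 / (2 * σ ^ 2) with hβ
  have hv : ((σ ^ 2).toNNReal : ℝ) = σ ^ 2 := Real.coe_toNNReal _ (by positivity)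
  have hsignal : 1 / σ ^ 2 * (Δ / 2) ^ 2 = β / 2 := by
    rw [hβ]
    field_simp
  have hnoise : (σ ^ 2).toNNReal * (1 / σ ^ 2 * (Δ / 2)) ^ 2 / 2 = β / 4 := by
    rw [hv, hβ]
    field_simp
    ring
  have hcosh : log (cosh (β / 2)) ≤ (β / 2) ^ 2 / 2 := by
    simpa only [log_exp] using log_le_log (cosh_pos _) (cosh_le_exp_half_sq (β / 2))
  rw [hsignal, hnoise]
  linarith
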